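/- arXiv:2210.04427 — 4 statements merged into one kernel-verified Lean document; each statement's English description precedes it below -/
import Mathlib

section
/- For softened probabilities p = SF(f; τ) of a fixed logit vector f ∈ ℝ^C, the variance v(p) = (1/C)Σ_c (p_c − 1/C)² is monotonically non-increasing as a function of τ ∈ (0, ∞). -/
/-!
Write `β = 1/τ`. Since `∑ c, p c = 1`, the variance is `(1/C) ∑ c, p c ^ 2 - 1/C²`, so it suffices
that `β ↦ ∑ c, p c ^ 2` is monotone on `β ≥ 0`. Its derivative is `2 (E_p[p f] - E_p[p] E_p[f])`,
and for `β ≥ 0` the weights `p c` increase with `f c`, so this covariance is nonnegative by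
Chebyshev's sum inequality with weights `p`.
-/

open Real Finset Set

variable {ι : Type*} [Fintype ι]

theorem Monovary.sum_mul_sum_le_sum_mul_sum {w a b : ι → ℝ} (hab : Monovary a b)
    (hw : ∀ i, 0 ≤ w i) :
    (∑ i, w i * a i) * (∑ i, w i * b i) ≤ (∑ i, w i) * ∑ i, w i * a i * b i := by
  have hpairs : 0 ≤ ∑ i, ∑ j, w i * w j * ((a i - a j) * (b i - b j)) :=
    sum_nonneg fun i _ ↦ sum_nonneg fun j _ ↦
      mul_nonneg (mul_nonneg (hw i) (hw j)) (hab.sub_mul_sub_nonneg j i)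
  have hexpand : ∑ i, ∑ j, w i * w j * ((a i - a j) * (b i - b j)) =
      2 * ((∑ i, w i) * (∑ i, w i * a i * b i) - (∑ i, w i * a i) * (∑ i, w i * b i)) := by
    have hterm : ∀ i j, w i * w j * ((a i - a j) * (b i - b j)) =
        w i * a i * b i * w j + w i * (w j * a j * b j) - w i * a i * (w j * b j)
          - w i * b i * (w j * a j) := fun i j ↦ by ring
    simp only [hterm, sum_add_distrib, sum_sub_distrib, ← sum_mul_sum]
    ring
  linarith

/-- Softmax at inverse temperature `β`: the paper's `p(τ)` is `softmax τ⁻¹ f`. -/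
noncomputable def softmax (β : ℝ) (f : ι → ℝ) (i : ι) : ℝ :=
  exp (β * f i) / ∑ j, exp (β * f j)

section softmax

variable [Nonempty ι] (β : ℝ) (f : ι → ℝ)

theorem sum_exp_mul_pos : 0 < ∑ j, exp (β * f j) :=
  sum_pos (fun _ _ ↦ exp_pos _) univ_nonempty

theorem softmax_nonneg (i : ι) : 0 ≤ softmax β f i :=
  div_nonneg (exp_pos _).le (sum_exp_mul_pos β f).le

theorem sum_softmax : ∑ i, softmax β f i = 1 := by
  simp only [softmax]
  rw [← sum_div, div_self (sum_exp_mul_pos β f).ne']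

theorem hasDerivAt_softmax (i : ι) :
    HasDerivAt (fun β ↦ softmax β f i) (softmax β f i * (f i - ∑ j, softmax β f j * f j)) β := by
  have hexp (j : ι) : HasDerivAt (fun β ↦ exp (β * f j)) (exp (β * f j) * f j) β :=
    (hasDerivAt_mul_const (f j)).exp
  refine ((hexp i).fun_div (HasDerivAt.fun_sum fun j _ ↦ hexp j)
    (sum_exp_mul_pos β f).ne').congr_deriv ?_
  simp only [softmax, div_mul_eq_mul_div, ← sum_div]
  field_simp

theorem hasDerivAt_sum_softmax_sq :
    HasDerivAt (fun β ↦ ∑ i, softmax β f i ^ 2)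
      (2 * (∑ i, softmax β f i * softmax β f i * f i -
        (∑ i, softmax β f i * softmax β f i) * ∑ i, softmax β f i * f i)) β := by
  refine (HasDerivAt.fun_sum fun i _ ↦ (hasDerivAt_softmax β f i).pow 2).congr_deriv ?_
  rw [sum_mul, ← sum_sub_distrib, mul_sum]
  refine sum_congr rfl fun i _ ↦ ?_
  norm_num
  ring

theorem softmax_monovary (hβ : 0 ≤ β) : Monovary (softmax β f) f :=
  (monovary_self f).comp_monotone_left fun _ _ hxy ↦
    div_le_div_of_nonneg_right (exp_le_exp.2 (mul_le_mul_of_nonneg_left hxy hβ))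
      (sum_exp_mul_pos β f).le

theorem monotoneOn_sum_softmax_sq : MonotoneOn (fun β ↦ ∑ i, softmax β f i ^ 2) (Ici 0) := by
  refine monotoneOn_of_hasDerivWithinAt_nonneg (convex_Ici 0)
    (fun β _ ↦ (hasDerivAt_sum_softmax_sq β f).continuousAt.continuousWithinAt)
    (fun β _ ↦ (hasDerivAt_sum_softmax_sq β f).hasDerivWithinAt) fun β hβ ↦ ?_
  rw [interior_Ici] at hβ
  have := (softmax_monovary β f hβ.le).sum_mul_sum_le_sum_mul_sum
    (softmax_nonneg β f)
  rw [sum_softmax, one_mul] at this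
  linarith

end softmax

theorem sum_sub_inv_card_sq {q : ι → ℝ} (hq : ∑ i, q i = 1) [Nonempty ι] :
    ∑ i, (q i - 1 / (Fintype.card ι : ℝ)) ^ 2 = ∑ i, q i ^ 2 - 1 / (Fintype.card ι : ℝ) := by
  have hcard : (Fintype.card ι : ℝ) ≠ 0 := Nat.cast_ne_zero.2 Fintype.card_ne_zero
  simp only [sub_sq, sum_add_distrib, sum_sub_distrib, ← sum_mul, ← mul_sum, hq, sum_const,
    card_univ, nsmul_eq_mul]
  field_simp
  ring

/-- The variance of the softened probabilities is non-increasing in temperature. -/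
theorem softmax_variance_antitone (C : ℕ) (hC : 1 ≤ C) (f : Fin C → ℝ)
    (p : ℝ → Fin C → ℝ)
    (hp : ∀ t i, p t i = Real.exp (f i / t) / ∑ j, Real.exp (f j / t)) :
    AntitoneOn (fun t => (1 / (C : ℝ)) * ∑ c, (p t c - 1 / (C : ℝ)) ^ 2)
      (Set.Ioi (0 : ℝ)) := by
  have : Nonempty (Fin C) := ⟨⟨0, hC⟩⟩
  have hp_softmax (t : ℝ) : p t = softmax t⁻¹ f :=
    funext fun i ↦ by simp only [hp, softmax, inv_mul_eq_div]
  have hvariance (t : ℝ) : ∑ c, (p t c - 1 / (C : ℝ)) ^ 2 =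
      ∑ c, softmax t⁻¹ f c ^ 2 - 1 / (C : ℝ) := by
    simpa [hp_softmax] using sum_sub_inv_card_sq (sum_softmax t⁻¹ f)
  intro a (ha : 0 < a) b (hb : 0 < b) hab
  simp only [hvariance]
  gcongr _ * (?_ - _)
  exact monotoneOn_sum_softmax_sq f (inv_pos.2 hb).le (inv_pos.2 ha).le (inv_anti₀ ha hab)
end

section
/- For a probability vector p ∈ ℝ^C with positive entries and p̂_c = p_c²/Σ_j p_j², we have Σ_c p_c log p_c − Σ_c p̂_c log p_c ≤ 0. -/
/-- Combining KL non-negativity and Jensen's inequality: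
    Σ p_c log p_c − Σ p̂_c log p_c ≤ 0 for p̂_c = p_c²/Σ p_j². -/
theorem sum_log_sub_hat_nonpos (C : ℕ) (p : Fin C → ℝ)
    (hpos : ∀ c, 0 < p c) (hsum : ∑ c, p c = 1) :
    ∑ c, p c * Real.log (p c) -
      ∑ c, (p c ^ 2 / ∑ j, p j ^ 2) * Real.log (p c) ≤ 0 := by
  set L : Fin C → ℝ := fun c => Real.log (p c) with hL
  set S : ℝ := ∑ j, p j ^ 2 with hS
  have hSpos : 0 < S := by
    have hC : 0 < C := by
      by_contra h
      have : C = 0 := by omega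
      subst this
      simp at hsum
    refine Finset.sum_pos (fun j _ => pow_pos (hpos j) 2) ?_
    exact ⟨⟨0, hC⟩, Finset.mem_univ _⟩
  have key : 0 ≤ ∑ c, ∑ j, p c * p j * ((p c - p j) * (L c - L j)) := by
    refine Finset.sum_nonneg fun c _ => Finset.sum_nonneg fun j _ => ?_
    refine mul_nonneg (mul_pos (hpos c) (hpos j)).le ?_
    rcases le_total (p j) (p c) with h | h
    · have hl := Real.log_le_log (hpos j) h
      simp only [hL]
      nlinarith
    · have hl := Real.log_le_log (hpos c) h
      simp only [hL]
      nlinarith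
  have expand : ∑ c, ∑ j, p c * p j * ((p c - p j) * (L c - L j))
      = 2 * ((∑ c, p c ^ 2 * L c) - S * ∑ c, p c * L c) := by
    have h1 : ∀ c j : Fin C, p c * p j * ((p c - p j) * (L c - L j))
        = (p c ^ 2 * L c) * p j + p c * (p j ^ 2 * L j)
          - (p c ^ 2) * (p j * L j) - (p c * L c) * (p j ^ 2) := by
      intro c j; ring
    simp_rw [h1]
    simp only [Finset.sum_add_distrib, Finset.sum_sub_distrib, ← Finset.mul_sum,
      ← Finset.sum_mul, hsum]
    ring
  have hkey2 : S * ∑ c, p c * L c ≤ ∑ c, p c ^ 2 * L c := by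
    rw [expand] at key; linarith
  have : ∑ c, (p c ^ 2 / S) * L c = (∑ c, p c ^ 2 * L c) / S := by
    rw [Finset.sum_div]; congr 1; ext c; ring
  rw [this, sub_nonpos, le_div_iff₀ hSpos, mul_comm]
  exact hkey2
end

section
/- Assume the target logit satisfies f_y ≥ f_c for all c ≠ y. Then the target softened probability p_y(τ) = exp(f_y/τ)/Σ_j exp(f_j/τ) is monotonically non-increasing in τ on (0, ∞). -/
/-- If the target logit is maximal, the target softened probability is
    non-increasing in temperature. -/
theorem target_prob_antitone (C : ℕ) (hC : 2 ≤ C) (f : Fin C → ℝ) (y : Fin C)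
    (hmax : ∀ c, f c ≤ f y)
    (p : ℝ → Fin C → ℝ)
    (hp : ∀ t i, p t i = Real.exp (f i / t) / ∑ j, Real.exp (f j / t)) :
    AntitoneOn (fun t => p t y) (Set.Ioi (0 : ℝ)) := by
  have hrw : ∀ t : ℝ, 0 < t →
      p t y = (∑ j, Real.exp ((f j - f y) / t))⁻¹ := by
    intro t ht
    rw [hp]
    have hy : Real.exp (f y / t) ≠ 0 := (Real.exp_pos _).ne'
    have hsum : ∑ j, Real.exp ((f j - f y) / t)
        = (∑ j, Real.exp (f j / t)) / Real.exp (f y / t) := by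
      rw [Finset.sum_div]
      congr 1
      funext j
      rw [← Real.exp_sub, sub_div]
    rw [hsum, inv_div]
  intro s hs t ht hst
  have hs' : (0:ℝ) < s := hs
  have ht' : (0:ℝ) < t := ht
  simp only
  rw [hrw s hs', hrw t ht']
  haveI : Nonempty (Fin C) := ⟨y⟩
  have hpos : 0 < ∑ j, Real.exp ((f j - f y) / s) :=
    Finset.sum_pos (fun j _ => Real.exp_pos _) (by simp [Finset.univ_nonempty])
  apply inv_anti₀ hpos
  apply Finset.sum_le_sum
  intro j _
  apply Real.exp_le_exp.mpr
  have hnp : f j - f y ≤ 0 := sub_nonpos.mpr (hmax j)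
  have : (1:ℝ)/t ≤ 1/s := one_div_le_one_div_of_le hs' hst
  calc (f j - f y) / s = (f j - f y) * (1/s) := by ring
    _ ≤ (f j - f y) * (1/t) := mul_le_mul_of_nonpos_left this hnp
    _ = (f j - f y) / t := by ring
end

section
/- Assume f_y ≥ f_c for all c. Then the derived average of wrong-class probabilities e(q)(τ) = (1/(C−1))·Σ_{c≠y} p_c(τ) is monotonically non-decreasing in τ ∈ (0, ∞). -/
/-- If the target logit is maximal, the derived average of wrong-class
    probabilities is non-decreasing in temperature. -/
theorem derived_average_monotone (C : ℕ) (hC : 2 ≤ C) (f : Fin C → ℝ) (y : Fin C)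
    (hmax : ∀ c, f c ≤ f y)
    (p : ℝ → Fin C → ℝ)
    (hp : ∀ t i, p t i = Real.exp (f i / t) / ∑ j, Real.exp (f j / t)) :
    MonotoneOn
      (fun t => (1 / ((C : ℝ) - 1)) * ∑ c ∈ Finset.univ.erase y, p t c)
      (Set.Ioi (0 : ℝ)) := by
  have hSpos : ∀ τ : ℝ, 0 < ∑ j, Real.exp (f j / τ) := by
    intro τ
    apply Finset.sum_pos (fun j _ => Real.exp_pos _)
    exact ⟨y, Finset.mem_univ y⟩
  have hsum : ∀ τ : ℝ, ∑ c ∈ Finset.univ.erase y, p τ c = 1 - p τ y := by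
    intro τ
    have h1 : ∑ c, p τ c = 1 := by
      simp only [hp]
      rw [← Finset.sum_div]
      exact div_self (hSpos τ).ne'
    have h2 := Finset.add_sum_erase Finset.univ (p τ) (Finset.mem_univ y)
    rw [h1] at h2
    linarith
  intro s hs t ht hst
  simp only [Set.mem_Ioi] at hs ht
  simp only [hsum]
  have hkey : p t y ≤ p s y := by
    rw [hp, hp]
    rw [div_le_div_iff₀ (hSpos t) (hSpos s)]
    rw [Finset.mul_sum, Finset.mul_sum]
    apply Finset.sum_le_sum
    intro j _
    rw [← Real.exp_add, ← Real.exp_add, Real.exp_le_exp]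
    have h := div_le_div_of_nonneg_left (sub_nonneg.2 (hmax j)) hs hst
    rw [sub_div, sub_div] at h
    linarith
  have hcoef : (0 : ℝ) ≤ 1 / ((C : ℝ) - 1) := by
    apply div_nonneg zero_le_one
    have : (2 : ℝ) ≤ (C : ℝ) := by exact_mod_cast hC
    linarith
  apply mul_le_mul_of_nonneg_left _ hcoef
  linarith
end
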